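/- arXiv:2108.13188 — 4 statements merged into one kernel-verified Lean document; each statement's English description precedes it below -/
import Mathlib

section
/- Let X be a real Banach space, 1 < α ≤ 2, M ≥ 1, ω ≥ 0. Let T, B, C₀ : [0,∞) → L(X) be strongly continuous (t ↦ T(t)x, B(t)x, C₀(t)x continuous for each x ∈ X) with ‖T(t)‖ ≤ M·e^(ωt)·t^(α−1)/Γ(α) and ‖C₀(t)‖ ≤ M·e^(ωt) for all t ≥ 0. Define recursively C_{n+1}(t)x = ∫₀ᵗ T(t−s) B(s) C_n(s)x ds. Then for every n ∈ ℕ and t ≥ 0, setting K_t = sup_{0≤s≤t} ‖B(s)‖, one has ‖C_n(t)x‖ ≤ M^(n+1) · K_t^n · e^(ωt) · (t^(nα)/Γ(nα+1)) · ‖x‖ for all x ∈ X. -/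
/-!
Induct on `n` with `K` any bound for `‖B‖` on `[0, t]`. In each step the integrand is bounded by
`M K` times the previous bound times the kernel bound, and the Beta integral
`∫₀ˢ r^{nα} (s - r)^{α-1} dr = Γ(nα+1) Γ(α) / Γ((n+1)α+1) · s^{(n+1)α}` cancels the Gamma
factors exactly, while `e^{ω(s-r)} e^{ωr} = e^{ωs}`. The supremum `K_t` is finite by the uniform
boundedness principle, since `B` is strongly continuous on the compact interval `[0, t]`.
-/

open MeasureTheory Set

theorem Real.integral_rpow_mul_sub_rpow {a b t : ℝ} (ha : 0 < a) (hb : 0 < b) (ht : 0 < t) :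
    ∫ s in (0 : ℝ)..t, s ^ (a - 1) * (t - s) ^ (b - 1) =
      Real.Gamma a * Real.Gamma b / Real.Gamma (a + b) * t ^ (a + b - 1) := by
  apply Complex.ofReal_injective
  have hscaled := Complex.betaIntegral_scaled a b ht
  rw [Complex.betaIntegral_eq_Gamma_mul_div _ _ (by simpa using ha) (by simpa using hb)]
    at hscaled
  rw [← intervalIntegral.integral_ofReal]
  push_cast
  rw [Complex.ofReal_cpow ht.le, ← Complex.Gamma_ofReal, ← Complex.Gamma_ofReal,
    ← Complex.Gamma_ofReal]
  push_cast
  rw [mul_comm _ ((t : ℂ) ^ _), ← hscaled]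
  refine intervalIntegral.integral_congr fun s hs => ?_
  rw [uIcc_of_le ht.le] at hs
  simp only [Complex.ofReal_cpow hs.1, Complex.ofReal_cpow (sub_nonneg.2 hs.2)]
  push_cast
  rfl

theorem intervalIntegral.norm_integral_le_of_norm_le_rpow_mul_sub_rpow {E : Type*}
    [NormedAddCommGroup E] [NormedSpace ℝ E] {F : ℝ → E} {a b t A : ℝ}
    (ha : 0 < a) (hb : 0 < b) (ht : 0 < t)
    (hF : ∀ s ∈ Ioc 0 t, ‖F s‖ ≤ A * (s ^ (a - 1) * (t - s) ^ (b - 1))) :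
    ‖∫ s in (0 : ℝ)..t, F s‖ ≤
      A * (Real.Gamma a * Real.Gamma b / Real.Gamma (a + b)) * t ^ (a + b - 1) := by
  have hbeta := Real.integral_rpow_mul_sub_rpow ha hb ht
  -- a non-integrable function has integral `0`, while the Beta integral is positive
  have hint : IntervalIntegrable (fun s => s ^ (a - 1) * (t - s) ^ (b - 1)) volume 0 t := by
    refine intervalIntegrable_of_integral_ne_zero (hbeta ▸ ne_of_gt ?_)
    have := Real.Gamma_pos_of_pos (add_pos ha hb)
    have := Real.Gamma_pos_of_pos ha
    have := Real.Gamma_pos_of_pos hb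
    positivity
  calc ‖∫ s in (0 : ℝ)..t, F s‖
      ≤ ∫ s in (0 : ℝ)..t, A * (s ^ (a - 1) * (t - s) ^ (b - 1)) :=
        norm_integral_le_of_norm_le ht.le (ae_of_all _ hF) (hint.const_mul A)
    _ = _ := by rw [integral_const_mul, hbeta, mul_assoc]

theorem ContinuousLinearMap.bddAbove_image_norm_of_continuousOn {ι 𝕜 E F : Type*}
    [TopologicalSpace ι] [NontriviallyNormedField 𝕜] [NormedAddCommGroup E] [NormedSpace 𝕜 E]
    [CompleteSpace E] [NormedAddCommGroup F] [NormedSpace 𝕜 F] {s : Set ι} (hs : IsCompact s)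
    {B : ι → E →L[𝕜] F} (hB : ∀ x, ContinuousOn (fun i => B i x) s) :
    BddAbove ((fun i => ‖B i‖) '' s) := by
  have hpointwise : ∀ x, ∃ c, ∀ i : s, ‖B i x‖ ≤ c := fun x =>
    (hs.exists_bound_of_continuousOn (hB x)).imp fun c hc i => hc i i.2
  obtain ⟨c, hc⟩ := banach_steinhaus hpointwise
  exact ⟨c, by rintro _ ⟨i, hi, rfl⟩; exact hc ⟨i, hi⟩⟩

theorem norm_perturbation_iterate_le {X : Type*} [NormedAddCommGroup X] [NormedSpace ℝ X]
    {α M ω K t : ℝ} {T B : ℝ → X →L[ℝ] X} {C : ℕ → ℝ → X →L[ℝ] X} (hα : 0 < α)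
    (hTbd : ∀ t : ℝ, 0 ≤ t → ‖T t‖ ≤ M * Real.exp (ω * t) * t ^ (α - 1) / Real.Gamma α)
    (hC0bd : ∀ t : ℝ, 0 ≤ t → ‖C 0 t‖ ≤ M * Real.exp (ω * t))
    (hrec : ∀ (n : ℕ) (t : ℝ) (x : X),
      C (n + 1) t x = ∫ s in (0 : ℝ)..t, T (t - s) (B s (C n s x)))
    (hB : ∀ s ∈ Icc 0 t, ‖B s‖ ≤ K) (n : ℕ) {s : ℝ} (hs : s ∈ Icc 0 t) (x : X) :
    ‖C n s x‖ ≤ M ^ (n + 1) * K ^ n * Real.exp (ω * s) *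
      (s ^ ((n : ℝ) * α) / Real.Gamma ((n : ℝ) * α + 1)) * ‖x‖ := by
  induction n generalizing s x with
  | zero => simpa using (C 0 s).le_of_opNorm_le (hC0bd s hs.1) x
  | succ n ih =>
    rw [hrec]
    rcases hs.1.eq_or_lt with rfl | hs0
    · simp [Real.zero_rpow (by positivity : ((n : ℝ) + 1) * α ≠ 0)]
    have hΓα := Real.Gamma_pos_of_pos hα
    have hΓn := Real.Gamma_pos_of_pos (by positivity : 0 < (n : ℝ) * α + 1)
    have hintegrand : ∀ r ∈ Ioc 0 s, ‖T (s - r) (B r (C n r x))‖ ≤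
        M ^ (n + 2) * K ^ (n + 1) * Real.exp (ω * s) * ‖x‖ /
            (Real.Gamma α * Real.Gamma (n * α + 1)) *
          (r ^ ((n * α + 1) - 1) * (s - r) ^ (α - 1)) := by
      intro r hr
      have hrt : r ∈ Icc 0 t := ⟨hr.1.le, hr.2.trans hs.2⟩
      have hTr := hTbd (s - r) (sub_nonneg.2 hr.2)
      have hBr := hB r hrt
      calc ‖T (s - r) (B r (C n r x))‖ ≤ ‖T (s - r)‖ * (‖B r‖ * ‖C n r x‖) :=
            (T (s - r)).le_opNorm_of_le ((B r).le_opNorm _)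
        _ ≤ (M * Real.exp (ω * (s - r)) * (s - r) ^ (α - 1) / Real.Gamma α) *
              (K * (M ^ (n + 1) * K ^ n * Real.exp (ω * r) *
                (r ^ ((n : ℝ) * α) / Real.Gamma ((n : ℝ) * α + 1)) * ‖x‖)) := by
            gcongr
            · exact (norm_nonneg _).trans hTr
            · exact (norm_nonneg _).trans hBr
            · exact ih hrt x
        _ = _ := by
            rw [add_sub_cancel_right, show ω * s = ω * (s - r) + ω * r by ring, Real.exp_add]
            field_simp
            ring
    refine (intervalIntegral.norm_integral_le_of_norm_le_rpow_mul_sub_rpow (by positivity) hα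
      hs0 hintegrand).trans_eq ?_
    have hexponent : (n * α + 1) + α - 1 = ((n + 1 : ℕ) : ℝ) * α := by push_cast; ring
    rw [hexponent, show (n * α + 1) + α = ((n + 1 : ℕ) : ℝ) * α + 1 by linarith]
    field_simp

theorem cosine_iterate_bound_general {X : Type*} [NormedAddCommGroup X] [NormedSpace ℝ X]
    [CompleteSpace X] (α M ω : ℝ) (hα1 : 1 < α)
    (T B : ℝ → X →L[ℝ] X) (C : ℕ → ℝ → X →L[ℝ] X)
    (hBcont : ∀ x : X, ContinuousOn (fun t => B t x) (Set.Ici 0))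
    (hTbd : ∀ t : ℝ, 0 ≤ t → ‖T t‖ ≤ M * Real.exp (ω * t) * t ^ (α - 1) / Real.Gamma α)
    (hC0bd : ∀ t : ℝ, 0 ≤ t → ‖C 0 t‖ ≤ M * Real.exp (ω * t))
    (hrec : ∀ (n : ℕ) (t : ℝ) (x : X),
      C (n + 1) t x = ∫ s in (0:ℝ)..t, T (t - s) (B s (C n s x)))
    (n : ℕ) (t : ℝ) (ht : 0 ≤ t) (x : X) :
    ‖C n t x‖ ≤ M ^ (n + 1) * (sSup ((fun s => ‖B s‖) '' Set.Icc 0 t)) ^ n *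
      Real.exp (ω * t) * (t ^ ((n : ℝ) * α) / Real.Gamma ((n : ℝ) * α + 1)) * ‖x‖ := by
  have hbdd := ContinuousLinearMap.bddAbove_image_norm_of_continuousOn
    (isCompact_Icc (a := 0) (b := t)) fun x => (hBcont x).mono Icc_subset_Ici_self
  exact norm_perturbation_iterate_le (by linarith) hTbd hC0bd hrec
    (fun s hs => le_csSup hbdd (mem_image_of_mem _ hs)) n ⟨ht, le_rfl⟩ x

/-- Bound on the perturbation iterates of the fractional cosine family:
`‖C_n(t)x‖ ≤ M^{n+1} K_t^n e^{ωt} (t^{nα}/Γ(nα+1)) ‖x‖`. -/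
theorem cosine_iterate_bound {X : Type*} [NormedAddCommGroup X] [NormedSpace ℝ X]
    [CompleteSpace X] (α M ω : ℝ) (hα1 : 1 < α) (hα2 : α ≤ 2) (hM : 1 ≤ M) (hω : 0 ≤ ω)
    (T B : ℝ → X →L[ℝ] X) (C : ℕ → ℝ → X →L[ℝ] X)
    (hTcont : ∀ x : X, ContinuousOn (fun t => T t x) (Set.Ici 0))
    (hBcont : ∀ x : X, ContinuousOn (fun t => B t x) (Set.Ici 0))
    (hC0cont : ∀ x : X, ContinuousOn (fun t => C 0 t x) (Set.Ici 0))
    (hTbd : ∀ t : ℝ, 0 ≤ t → ‖T t‖ ≤ M * Real.exp (ω * t) * t ^ (α - 1) / Real.Gamma α)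
    (hC0bd : ∀ t : ℝ, 0 ≤ t → ‖C 0 t‖ ≤ M * Real.exp (ω * t))
    (hrec : ∀ (n : ℕ) (t : ℝ) (x : X),
      C (n + 1) t x = ∫ s in (0:ℝ)..t, T (t - s) (B s (C n s x)))
    (n : ℕ) (t : ℝ) (ht : 0 ≤ t) (x : X) :
    ‖C n t x‖ ≤ M ^ (n + 1) * (sSup ((fun s => ‖B s‖) '' Set.Icc 0 t)) ^ n *
      Real.exp (ω * t) * (t ^ ((n : ℝ) * α) / Real.Gamma ((n : ℝ) * α + 1)) * ‖x‖ :=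
  cosine_iterate_bound_general α M ω hα1 T B C hBcont hTbd hC0bd hrec n t ht x
end

section
/- Under the hypotheses of the cosine-iterate bounds (T, B, C₀ strongly continuous, ‖T(t)‖ ≤ M e^(ωt) t^(α−1)/Γ(α), ‖C₀(t)‖ ≤ M e^(ωt), C_{n+1}(t)x = ∫₀ᵗ T(t−s)B(s)C_n(s)x ds, 1 < α ≤ 2, M ≥ 1, ω ≥ 0), for every t ≥ 0 and x ∈ X the tail series Σ_{n=1}^∞ C_n(t)x converges absolutely and ‖Σ_{n=1}^∞ C_n(t)x‖ ≤ M · e^(ωt) · [E_α(M·K_t·t^α) − 1] · ‖x‖, where K_t = sup_{0≤s≤t} ‖B(s)‖. Equivalently, ‖C_α(t; A+B) − C_α(t; A)‖ ≤ M e^(ωt)[E_α(M K_t t^α) − 1]. -/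
/-!
By induction, `‖C_n(s)x‖ ≤ M e^{ωs} (M K s^α)^n / Γ(nα+1) ‖x‖` on `[0, t]`: the kernel bound on
`T` and the bound `‖B‖ ≤ K` reduce the Volterra step to the Beta integral
`∫₀ˢ (s-r)^{α-1} r^{nα} dr = Γ(α) Γ(nα+1) / Γ((n+1)α+1) s^{(n+1)α}`. Summing over `n ≥ 1` gives
the Mittag-Leffler tail, which converges since `Γ(kα+1) ≥ k!` for `α ≥ 1`. That `K` is finite is
the uniform boundedness principle applied to the strongly continuous family `B` on `[0, t]`.
-/

open MeasureTheory Set Real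

lemma integral_rpow_mul_one_sub_rpow {a b : ℝ} (ha : 0 < a) (hb : 0 < b) :
    ∫ u in (0:ℝ)..1, u ^ (b - 1) * (1 - u) ^ (a - 1) = Gamma a * Gamma b / Gamma (a + b) := by
  have hbeta : Complex.betaIntegral b a =
      ((∫ u in (0:ℝ)..1, u ^ (b - 1) * (1 - u) ^ (a - 1) : ℝ) : ℂ) := by
    rw [Complex.betaIntegral, ← intervalIntegral.integral_ofReal]
    refine intervalIntegral.integral_congr fun u hu => ?_
    rw [uIcc_of_le zero_le_one] at hu
    push_cast
    rw [Complex.ofReal_cpow hu.1, Complex.ofReal_cpow (sub_nonneg.2 hu.2)]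
    push_cast
    ring
  have h := Complex.betaIntegral_eq_Gamma_mul_div (b : ℂ) a (by simpa using hb) (by simpa using ha)
  rw [hbeta, ← Complex.ofReal_add, Complex.Gamma_ofReal, Complex.Gamma_ofReal,
    Complex.Gamma_ofReal] at h
  rw [add_comm a, mul_comm (Gamma a)]
  exact_mod_cast h

lemma integral_sub_rpow_mul_rpow {a b t : ℝ} (ha : 0 < a) (hb : 0 ≤ b) (ht : 0 ≤ t) :
    ∫ s in (0:ℝ)..t, (t - s) ^ (a - 1) * s ^ b =
      Gamma a * Gamma (b + 1) / Gamma (a + b + 1) * t ^ (a + b) := by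
  rcases ht.eq_or_lt with rfl | ht
  · simp [zero_rpow (by positivity : a + b ≠ 0)]
  have hsub : ∫ s in (0:ℝ)..t, (t - s) ^ (a - 1) * s ^ b =
      t • ∫ u in (0:ℝ)..1, (t - t * u) ^ (a - 1) * (t * u) ^ b := by
    simpa using (intervalIntegral.smul_integral_comp_mul_left
      (fun s => (t - s) ^ (a - 1) * s ^ b) t (a := 0) (b := 1)).symm
  have hscale : ∫ u in (0:ℝ)..1, (t - t * u) ^ (a - 1) * (t * u) ^ b =
      t ^ (a - 1) * t ^ b * ∫ u in (0:ℝ)..1, u ^ (b + 1 - 1) * (1 - u) ^ (a - 1) := by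
    rw [← intervalIntegral.integral_const_mul]
    refine intervalIntegral.integral_congr fun u hu => ?_
    rw [uIcc_of_le zero_le_one] at hu
    simp only [add_sub_cancel_right]
    rw [← mul_one_sub, mul_rpow ht.le (sub_nonneg.2 hu.2), mul_rpow ht.le hu.1]
    ring
  rw [hsub, hscale, integral_rpow_mul_one_sub_rpow ha (by linarith), smul_eq_mul, ← add_assoc]
  have hpow : t * (t ^ (a - 1) * t ^ b) = t ^ (a + b) := by
    rw [← rpow_add ht, ← rpow_one_add' ht.le (by linarith)]
    ring_nf
  rw [← hpow]
  ring

lemma factorial_le_Gamma_nat_mul_add_one {α : ℝ} (hα : 1 ≤ α) (k : ℕ) :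
    (k.factorial : ℝ) ≤ Gamma (k * α + 1) := by
  rcases Nat.eq_zero_or_pos k with rfl | hk
  · simp
  have hk1 : (1 : ℝ) ≤ k := by exact_mod_cast hk
  rw [← Gamma_nat_eq_factorial]
  exact Gamma_strictMonoOn_Ici.monotoneOn (by simp; linarith) (by simp; nlinarith)
    (by nlinarith)

lemma summable_pow_div_Gamma_nat_mul_add_one {α : ℝ} (hα : 1 ≤ α) (z : ℝ) :
    Summable fun k : ℕ => z ^ k / Gamma (k * α + 1) := by
  refine .of_norm_bounded (summable_pow_div_factorial |z|) fun k => ?_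
  rw [norm_div, norm_pow, norm_of_nonneg (Gamma_pos_of_pos (by positivity)).le]
  exact div_le_div_of_nonneg_left (by positivity) (by positivity)
    (factorial_le_Gamma_nat_mul_add_one hα k)

lemma bddAbove_norm_image_of_continuousOn {𝕜 E F α : Type*} [NontriviallyNormedField 𝕜]
    [NormedAddCommGroup E] [NormedSpace 𝕜 E] [CompleteSpace E]
    [NormedAddCommGroup F] [NormedSpace 𝕜 F] [TopologicalSpace α]
    {B : α → E →L[𝕜] F} {S : Set α} (hS : IsCompact S)
    (hB : ∀ x, ContinuousOn (fun s => B s x) S) :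
    BddAbove ((fun s => ‖B s‖) '' S) := by
  have hpointwise : ∀ x, ∃ c, ∀ s : S, ‖B s x‖ ≤ c := fun x =>
    (hS.exists_bound_of_continuousOn (hB x)).imp fun _ hc s => hc s s.2
  obtain ⟨c, hc⟩ := banach_steinhaus hpointwise
  exact ⟨c, by rintro _ ⟨s, hs, rfl⟩; exact hc ⟨s, hs⟩⟩

lemma norm_integral_volterra_le {X : Type*} [NormedAddCommGroup X] [NormedSpace ℝ X]
    {T B : ℝ → X →L[ℝ] X} {y : ℝ → X} {α β M ω K D s : ℝ}
    (hα : 0 < α) (hβ : 0 ≤ β) (hK : 0 ≤ K) (hs : 0 ≤ s)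
    (hT : ∀ u, 0 ≤ u → ‖T u‖ ≤ M * exp (ω * u) * u ^ (α - 1) / Gamma α)
    (hB : ∀ r ∈ Icc 0 s, ‖B r‖ ≤ K)
    (hy : ∀ r ∈ Icc 0 s, ‖y r‖ ≤ D * exp (ω * r) * r ^ β / Gamma (β + 1)) :
    ‖∫ r in (0:ℝ)..s, T (s - r) (B r (y r))‖ ≤
      M * K * D * exp (ω * s) * s ^ (α + β) / Gamma (α + β + 1) := by
  set c := M * K * D * exp (ω * s) / (Gamma α * Gamma (β + 1)) with hc
  have hbeta := integral_sub_rpow_mul_rpow hα hβ hs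
  have hint : IntervalIntegrable (fun r => (s - r) ^ (α - 1) * r ^ β) volume 0 s := by
    rcases hs.eq_or_lt with rfl | hs'
    · exact .refl
    -- a function whose (junk-valued) interval integral is nonzero must be integrable
    refine intervalIntegral.intervalIntegrable_of_integral_ne_zero (hbeta ▸ (ne_of_gt ?_))
    have := Gamma_pos_of_pos hα
    have := Gamma_pos_of_pos (by linarith : 0 < β + 1)
    have := Gamma_pos_of_pos (by linarith : 0 < α + β + 1)
    positivity
  have hpt : ∀ r ∈ Ioc 0 s, ‖T (s - r) (B r (y r))‖ ≤ c * ((s - r) ^ (α - 1) * r ^ β) := by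
    rintro r ⟨hr0, hrs⟩
    have hTr := hT (s - r) (sub_nonneg.2 hrs)
    calc ‖T (s - r) (B r (y r))‖ ≤ ‖T (s - r)‖ * (‖B r‖ * ‖y r‖) :=
          (T _).le_opNorm_of_le ((B r).le_opNorm _)
      _ ≤ M * exp (ω * (s - r)) * (s - r) ^ (α - 1) / Gamma α *
            (K * (D * exp (ω * r) * r ^ β / Gamma (β + 1))) :=
          mul_le_mul hTr (mul_le_mul (hB r ⟨hr0.le, hrs⟩) (hy r ⟨hr0.le, hrs⟩) (norm_nonneg _) hK)
            (by positivity) ((norm_nonneg _).trans hTr)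
      _ = c * ((s - r) ^ (α - 1) * r ^ β) := by
          rw [hc, mul_sub, exp_sub]
          field_simp
  calc ‖∫ r in (0:ℝ)..s, T (s - r) (B r (y r))‖
      ≤ ∫ r in (0:ℝ)..s, c * ((s - r) ^ (α - 1) * r ^ β) :=
        intervalIntegral.norm_integral_le_of_norm_le hs (ae_of_all _ hpt) (hint.const_mul c)
    _ = M * K * D * exp (ω * s) * s ^ (α + β) / Gamma (α + β + 1) := by
        have := (Gamma_pos_of_pos hα).ne'
        have := (Gamma_pos_of_pos (by linarith : 0 < β + 1)).ne'
        rw [intervalIntegral.integral_const_mul, hbeta, hc]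
        field_simp

lemma norm_iterate_le {X : Type*} [NormedAddCommGroup X] [NormedSpace ℝ X]
    {T B : ℝ → X →L[ℝ] X} {C : ℕ → ℝ → X →L[ℝ] X} {α M ω K t : ℝ}
    (hα : 0 < α) (hK : 0 ≤ K)
    (hT : ∀ u, 0 ≤ u → ‖T u‖ ≤ M * exp (ω * u) * u ^ (α - 1) / Gamma α)
    (hC₀ : ∀ s, 0 ≤ s → ‖C 0 s‖ ≤ M * exp (ω * s))
    (hrec : ∀ n s x, C (n + 1) s x = ∫ r in (0:ℝ)..s, T (s - r) (B r (C n r x)))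
    (hB : ∀ s ∈ Icc 0 t, ‖B s‖ ≤ K) (x : X) (n : ℕ) :
    ∀ s ∈ Icc 0 t, ‖C n s x‖ ≤
      M * exp (ω * s) * ((M * K * s ^ α) ^ n / Gamma (n * α + 1)) * ‖x‖ := by
  induction n with
  | zero =>
    rintro s ⟨hs, -⟩
    simpa using (C 0 s).le_of_opNorm_le (hC₀ s hs) x
  | succ n ih =>
    rintro s ⟨hs, hst⟩
    have hy : ∀ r ∈ Icc 0 s, ‖C n r x‖ ≤
        M * (M * K) ^ n * ‖x‖ * exp (ω * r) * r ^ (n * α) / Gamma (n * α + 1) := by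
      rintro r ⟨hr, hrs⟩
      refine (ih r ⟨hr, hrs.trans hst⟩).trans_eq ?_
      rw [mul_pow, mul_comm (n : ℝ), rpow_mul_natCast hr]
      ring
    have hstep := norm_integral_volterra_le hα (by positivity) hK hs hT
      (fun r hr => hB r ⟨hr.1, hr.2.trans hst⟩) hy
    rw [hrec]
    refine hstep.trans_eq ?_
    have hexp : α + n * α = ((n + 1 : ℕ) : ℝ) * α := by push_cast; ring
    rw [hexp, mul_comm _ α, rpow_mul_natCast hs]
    ring

lemma summable_norm_and_norm_tsum_le_of_le_succ {E : Type*} [NormedAddCommGroup E]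
    {v : ℕ → E} {f : ℕ → ℝ} {A : ℝ} (hf : Summable f) (hv : ∀ n, ‖v n‖ ≤ A * f (n + 1)) :
    Summable (fun n => ‖v n‖) ∧ ‖∑' n, v n‖ ≤ A * (∑' k, f k - f 0) := by
  have hf' : Summable fun n => A * f (n + 1) := ((summable_nat_add_iff 1).2 hf).mul_left A
  have hsum : Summable fun n => ‖v n‖ := hf'.of_nonneg_of_le (fun _ => norm_nonneg _) hv
  refine ⟨hsum, ?_⟩
  calc ‖∑' n, v n‖ ≤ ∑' n, ‖v n‖ := norm_tsum_le_tsum_norm hsum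
    _ ≤ ∑' n, A * f (n + 1) := hsum.tsum_le_tsum hv hf'
    _ = A * (∑' k, f k - f 0) := by rw [tsum_mul_left, hf.tsum_eq_zero_add, add_sub_cancel_left]

theorem perturbed_cosine_difference_bound_general {X : Type*} [NormedAddCommGroup X]
    [NormedSpace ℝ X] [CompleteSpace X]
    (α M ω : ℝ) (hα1 : 1 < α)
    (T B : ℝ → X →L[ℝ] X) (C : ℕ → ℝ → X →L[ℝ] X)
    (hBcont : ∀ x : X, ContinuousOn (fun t => B t x) (Set.Ici 0))
    (hTbd : ∀ t : ℝ, 0 ≤ t → ‖T t‖ ≤ M * Real.exp (ω * t) * t ^ (α - 1) / Real.Gamma α)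
    (hC0bd : ∀ t : ℝ, 0 ≤ t → ‖C 0 t‖ ≤ M * Real.exp (ω * t))
    (hrec : ∀ (n : ℕ) (t : ℝ) (x : X),
      C (n + 1) t x = ∫ s in (0:ℝ)..t, T (t - s) (B s (C n s x)))
    (t : ℝ) (ht : 0 ≤ t) (x : X) :
    Summable (fun n : ℕ => ‖C (n + 1) t x‖) ∧
    ‖∑' n : ℕ, C (n + 1) t x‖ ≤ M * Real.exp (ω * t) *
      ((∑' k : ℕ, (M * (sSup ((fun s => ‖B s‖) '' Set.Icc 0 t)) * t ^ α) ^ k /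
        Real.Gamma ((k : ℝ) * α + 1)) - 1) * ‖x‖ := by
  set K := sSup ((fun s => ‖B s‖) '' Icc 0 t)
  have hBdd : BddAbove ((fun s => ‖B s‖) '' Icc 0 t) :=
    bddAbove_norm_image_of_continuousOn isCompact_Icc fun y => (hBcont y).mono Icc_subset_Ici_self
  have hB : ∀ s ∈ Icc 0 t, ‖B s‖ ≤ K := fun s hs => le_csSup hBdd (mem_image_of_mem _ hs)
  have hK : 0 ≤ K := (norm_nonneg _).trans (hB 0 ⟨le_rfl, ht⟩)
  have hiter := norm_iterate_le (by linarith) hK hTbd hC0bd hrec hB x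
  obtain ⟨hsum, hle⟩ := summable_norm_and_norm_tsum_le_of_le_succ
    (summable_pow_div_Gamma_nat_mul_add_one hα1.le (M * K * t ^ α))
    (A := M * exp (ω * t) * ‖x‖) fun n =>
      (hiter (n + 1) t ⟨ht, le_rfl⟩).trans_eq (by ring)
  refine ⟨hsum, hle.trans_eq ?_⟩
  simp only [pow_zero, CharP.cast_eq_zero, zero_mul, zero_add, Gamma_one, div_one]
  ring

/-- The tail series `Σ_{n≥1} C_n(t)x` converges absolutely and
`‖C_α(t;A+B)x − C_α(t;A)x‖ ≤ M e^{ωt}[E_α(M K_t t^α) − 1] ‖x‖`. -/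
theorem perturbed_cosine_difference_bound {X : Type*} [NormedAddCommGroup X]
    [NormedSpace ℝ X] [CompleteSpace X]
    (α M ω : ℝ) (hα1 : 1 < α) (hα2 : α ≤ 2) (hM : 1 ≤ M) (hω : 0 ≤ ω)
    (T B : ℝ → X →L[ℝ] X) (C : ℕ → ℝ → X →L[ℝ] X)
    (hTcont : ∀ x : X, ContinuousOn (fun t => T t x) (Set.Ici 0))
    (hBcont : ∀ x : X, ContinuousOn (fun t => B t x) (Set.Ici 0))
    (hC0cont : ∀ x : X, ContinuousOn (fun t => C 0 t x) (Set.Ici 0))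
    (hTbd : ∀ t : ℝ, 0 ≤ t → ‖T t‖ ≤ M * Real.exp (ω * t) * t ^ (α - 1) / Real.Gamma α)
    (hC0bd : ∀ t : ℝ, 0 ≤ t → ‖C 0 t‖ ≤ M * Real.exp (ω * t))
    (hrec : ∀ (n : ℕ) (t : ℝ) (x : X),
      C (n + 1) t x = ∫ s in (0:ℝ)..t, T (t - s) (B s (C n s x)))
    (t : ℝ) (ht : 0 ≤ t) (x : X) :
    Summable (fun n : ℕ => ‖C (n + 1) t x‖) ∧
    ‖∑' n : ℕ, C (n + 1) t x‖ ≤ M * Real.exp (ω * t) *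
      ((∑' k : ℕ, (M * (sSup ((fun s => ‖B s‖) '' Set.Icc 0 t)) * t ^ α) ^ k /
        Real.Gamma ((k : ℝ) * α + 1)) - 1) * ‖x‖ :=
  perturbed_cosine_difference_bound_general α M ω hα1 T B C hBcont hTbd hC0bd hrec t ht x
end

section
/- Let X be a real Banach space, 1 < α ≤ 2, M ≥ 1, ω ≥ 0, b ≥ 0. Let T : [0,∞) → L(X) be strongly continuous with ‖T(t)‖ ≤ M·e^(ωt)·t^(α−1)·E_{α,α}(b·t^α) for all t > 0, and let f : [0,∞) → X be continuous. Then for every t ≥ 0, with N_t = sup_{0≤s≤t} ‖f(s)‖, one has ‖∫₀ᵗ T(t−s) f(s) ds‖ ≤ M · N_t · e^(ωt) · t^α · E_{α,α+1}(b·t^α). -/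
open MeasureTheory Set

private lemma aux_rpow {α γ : ℝ} (b : ℝ) {u : ℝ} (hu : 0 ≤ u) (hα : 0 ≤ α) (hγ : 0 < γ)
    (k : ℕ) : u ^ γ * (b * u ^ α) ^ k = b ^ k * u ^ ((k : ℝ) * α + γ) := by
  have h1 : (0:ℝ) ≤ (k : ℝ) * α := by positivity
  rw [mul_pow, ← Real.rpow_natCast (u ^ α) k, ← Real.rpow_mul hu,
    Real.rpow_add' hu (by positivity : (k : ℝ) * α + γ ≠ 0), mul_comm α (k : ℝ)]
  ring

private lemma summable_ml {α β : ℝ} (x : ℝ) (hα : 1 ≤ α) (hβ : 0 < β) (hx : 0 ≤ x) :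
    Summable (fun k : ℕ => x ^ k / Real.Gamma ((k : ℝ) * α + β)) := by
  have hα0 : (0:ℝ) < α := lt_of_lt_of_le one_pos hα
  rw [← summable_nat_add_iff 2]
  have hsum : Summable (fun k : ℕ => x ^ (k + 2) / (Nat.factorial (k+1) : ℝ)) := by
    have h1 : Summable (fun k : ℕ => x ^ (k + 1) / (Nat.factorial (k+1) : ℝ)) :=
      (summable_nat_add_iff 1).2 (Real.summable_pow_div_factorial x)
    exact (h1.mul_left x).congr fun k => by ring
  refine Summable.of_nonneg_of_le (fun k => ?_) (fun k => ?_) hsum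
  · have hΓ : 0 < Real.Gamma (((k + 2 : ℕ) : ℝ) * α + β) :=
      Real.Gamma_pos_of_pos (by positivity)
    positivity
  · have h2 : (2:ℝ) ≤ ((k + 2 : ℕ) : ℝ) := by push_cast; linarith [Nat.cast_nonneg (α := ℝ) k]
    have hm : ((k + 2 : ℕ) : ℝ) ≤ ((k + 2 : ℕ) : ℝ) * α + β := by
      nlinarith [Nat.cast_nonneg (α := ℝ) k, hβ]
    have hΓ : Real.Gamma (((k + 2 : ℕ) : ℝ)) ≤ Real.Gamma (((k + 2 : ℕ) : ℝ) * α + β) :=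
      Real.Gamma_strictMonoOn_Ici.monotoneOn h2 (le_trans h2 hm) hm
    have hfact : Real.Gamma (((k + 2 : ℕ) : ℝ)) = (Nat.factorial (k+1) : ℝ) := by
      rw [show ((k + 2 : ℕ) : ℝ) = ((k + 1 : ℕ) : ℝ) + 1 by push_cast; ring,
        Real.Gamma_nat_eq_factorial]
    rw [← hfact]
    have hΓ2 : (0:ℝ) < Real.Gamma (((k + 2 : ℕ) : ℝ)) := by
      rw [hfact]; positivity
    gcongr

private lemma integral_sub_rpow {p t : ℝ} (hp : 0 < p) (ht : 0 ≤ t) :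
    ∫ s in (0:ℝ)..t, (t - s) ^ p = t ^ (p + 1) / (p + 1) := by
  rw [intervalIntegral.integral_comp_sub_left (fun u => u ^ p) t]
  simp only [sub_self, sub_zero]
  rw [integral_rpow (Or.inl (by linarith)), Real.zero_rpow (by positivity)]
  ring

private lemma intervalIntegrable_sub_rpow {p t : ℝ} (hp : 0 < p) :
    IntervalIntegrable (fun s : ℝ => (t - s) ^ p) volume 0 t := by
  have h := (intervalIntegral.intervalIntegrable_rpow' (a := 0) (b := t)
    (show (-1:ℝ) < p by linarith)).comp_sub_left t
  simpa using h.symm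

/-- Norm estimate for the variation-of-constants particular solution
`w(t) = ∫₀ᵗ T(t−s) f(s) ds`: if `‖T(t)‖ ≤ M e^{ωt} t^{α−1} E_{α,α}(b t^α)` then
`‖w(t)‖ ≤ M N_t e^{ωt} t^α E_{α,α+1}(b t^α)`. -/
theorem variation_of_constants_bound {X : Type*} [NormedAddCommGroup X]
    [NormedSpace ℝ X] [CompleteSpace X]
    (α M ω b : ℝ) (hα1 : 1 < α) (hα2 : α ≤ 2) (hM : 1 ≤ M) (hω : 0 ≤ ω) (hb : 0 ≤ b)
    (T : ℝ → X →L[ℝ] X)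
    (hTcont : ∀ x : X, ContinuousOn (fun t => T t x) (Set.Ici 0))
    (hTbd : ∀ t : ℝ, 0 < t →
      ‖T t‖ ≤ M * Real.exp (ω * t) * t ^ (α - 1) *
        ∑' k : ℕ, (b * t ^ α) ^ k / Real.Gamma ((k : ℝ) * α + α))
    (f : ℝ → X) (hf : ContinuousOn f (Set.Ici 0))
    (t : ℝ) (ht : 0 ≤ t) :
    ‖∫ s in (0:ℝ)..t, T (t - s) (f s)‖
      ≤ M * (sSup ((fun s => ‖f s‖) '' Set.Icc 0 t)) * Real.exp (ω * t) * t ^ α *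
        ∑' k : ℕ, (b * t ^ α) ^ k / Real.Gamma ((k : ℝ) * α + α + 1) := by
  have hα0 : (0:ℝ) < α := by linarith
  have hαm1 : (0:ℝ) < α - 1 := by linarith
  have hM0 : (0:ℝ) ≤ M := by linarith
  rcases eq_or_lt_of_le ht with rfl | ht0
  · simp [Real.zero_rpow hα0.ne']
  -- notation
  set N := sSup ((fun s => ‖f s‖) '' Set.Icc 0 t) with hNdef
  have hbddN : BddAbove ((fun s => ‖f s‖) '' Set.Icc 0 t) :=
    (isCompact_Icc.image_of_continuousOn ((hf.mono Icc_subset_Ici_self).norm)).bddAbove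
  have hfN : ∀ s ∈ Set.Icc (0:ℝ) t, ‖f s‖ ≤ N := fun s hs => le_csSup hbddN ⟨s, hs, rfl⟩
  have hN0 : (0:ℝ) ≤ N := le_trans (norm_nonneg _) (hfN 0 ⟨le_refl 0, ht⟩)
  have hexpnn : (0:ℝ) < Real.exp (ω * t) := Real.exp_pos _
  -- the summand functions and their integrals
  set g : ℕ → ℝ → ℝ := fun k s =>
    (M * N * Real.exp (ω * t) * (t - s) ^ (α - 1)) *
      ((b * (t - s) ^ α) ^ k / Real.Gamma ((k : ℝ) * α + α)) with hgdef
  set c : ℕ → ℝ := fun k =>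
    M * N * Real.exp (ω * t) * t ^ α *
      ((b * t ^ α) ^ k / Real.Gamma ((k : ℝ) * α + α + 1)) with hcdef
  have hΓpos : ∀ k : ℕ, (0:ℝ) < Real.Gamma ((k : ℝ) * α + α) :=
    fun k => Real.Gamma_pos_of_pos (by positivity)
  have hΓpos1 : ∀ k : ℕ, (0:ℝ) < Real.Gamma ((k : ℝ) * α + α + 1) :=
    fun k => Real.Gamma_pos_of_pos (by positivity)
  have hck_nonneg : ∀ k, 0 ≤ c k := by
    intro k
    have h1 := hΓpos1 k
    have h2 : (0:ℝ) ≤ b * t ^ α := by positivity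
    have h3 : (0:ℝ) ≤ t ^ α := Real.rpow_nonneg ht α
    rw [hcdef]
    positivity
  have hcsum : Summable c := by
    have h := (summable_ml (b * t ^ α) hα1.le (by linarith : (0:ℝ) < α + 1)
      (by positivity)).mul_left (M * N * Real.exp (ω * t) * t ^ α)
    simp only [← add_assoc] at h
    exact h.congr fun k => by rw [hcdef]
  have hcnn : (0:ℝ) ≤ ∑' k, c k := tsum_nonneg hck_nonneg
  -- per-k integral computation
  have hgInt : ∀ k : ℕ, IntegrableOn (g k) (Set.Ioo 0 t) := by
    intro k
    have hp : (0:ℝ) < (k : ℝ) * α + (α - 1) := by positivity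
    have hbase : IntegrableOn
        (fun s : ℝ => (M * N * Real.exp (ω * t) * b ^ k / Real.Gamma ((k : ℝ) * α + α)) *
          (t - s) ^ ((k : ℝ) * α + (α - 1))) (Set.Ioo 0 t) := by
      have := ((intervalIntegrable_sub_rpow (t := t) hp).const_mul
        (M * N * Real.exp (ω * t) * b ^ k / Real.Gamma ((k : ℝ) * α + α)))
      exact ((intervalIntegrable_iff_integrableOn_Ioc_of_le ht).1 this).mono_set
        Set.Ioo_subset_Ioc_self
    refine hbase.congr_fun (fun s hs => ?_) measurableSet_Ioo
    have hu : (0:ℝ) ≤ t - s := by have := hs.2; linarith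
    have haux := aux_rpow b hu hα0.le hαm1 k
    rw [hgdef]
    simp only
    linear_combination
      (M * N * Real.exp (ω * t) / Real.Gamma ((k : ℝ) * α + α)) * haux.symm
  have hgnn : ∀ k : ℕ, ∀ s ∈ Set.Ioo (0:ℝ) t, 0 ≤ g k s := by
    intro k s hs
    have hu : (0:ℝ) ≤ t - s := by have := hs.2; linarith
    have h1 := hΓpos k
    have h2 : (0:ℝ) ≤ (t - s) ^ (α - 1) := Real.rpow_nonneg hu _
    have h3 : (0:ℝ) ≤ (t - s) ^ α := Real.rpow_nonneg hu _
    rw [hgdef]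
    positivity
  have hgintval : ∀ k : ℕ, ∫ s in Set.Ioo (0:ℝ) t, g k s = c k := by
    intro k
    have hp : (0:ℝ) < (k : ℝ) * α + (α - 1) := by positivity
    have hcongr : ∫ s in Set.Ioo (0:ℝ) t, g k s =
        ∫ s in Set.Ioo (0:ℝ) t,
          (M * N * Real.exp (ω * t) * b ^ k / Real.Gamma ((k : ℝ) * α + α)) *
            (t - s) ^ ((k : ℝ) * α + (α - 1)) := by
      refine setIntegral_congr_fun measurableSet_Ioo fun s hs => ?_
      have hu : (0:ℝ) ≤ t - s := by have := hs.2; linarith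
      have haux := aux_rpow b hu hα0.le hαm1 k
      rw [hgdef]
      simp only
      linear_combination
        (M * N * Real.exp (ω * t) / Real.Gamma ((k : ℝ) * α + α)) * haux
    rw [hcongr, MeasureTheory.integral_const_mul,
      Measure.restrict_congr_set Ioo_ae_eq_Ioc,
      ← intervalIntegral.integral_of_le ht, integral_sub_rpow hp ht]
    have hDpos : (0:ℝ) < (k : ℝ) * α + α := by positivity
    rw [show (k : ℝ) * α + (α - 1) + 1 = (k : ℝ) * α + α by ring]
    rw [hcdef]
    simp only
    rw [Real.Gamma_add_one hDpos.ne']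
    have h3 : t ^ α * (t ^ α) ^ k = t ^ ((k : ℝ) * α + α) := by
      rw [← Real.rpow_natCast (t ^ α) k, ← Real.rpow_mul ht,
        Real.rpow_add' ht (by positivity : (k : ℝ) * α + α ≠ 0), mul_comm α (k : ℝ)]
      ring
    rw [mul_pow, ← h3]
    field_simp
  -- main estimate
  have hmain : ‖∫ s in (0:ℝ)..t, T (t - s) (f s)‖ ≤ ∑' k, c k := by
    rw [intervalIntegral.integral_of_le ht]
    refine le_trans (MeasureTheory.norm_integral_le_lintegral_norm _) ?_
    refine ENNReal.toReal_le_of_le_ofReal hcnn ?_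
    rw [← Measure.restrict_congr_set Ioo_ae_eq_Ioc]
    have hstep1 : ∫⁻ s in Set.Ioo (0:ℝ) t, ENNReal.ofReal ‖T (t - s) (f s)‖ ≤
        ∫⁻ s in Set.Ioo (0:ℝ) t, ∑' k, ENNReal.ofReal (g k s) := by
      refine setLIntegral_mono' measurableSet_Ioo fun s hs => ?_
      have hu : (0:ℝ) < t - s := by have := hs.2; linarith
      have hu0 : (0:ℝ) ≤ t - s := hu.le
      have hsmem : s ∈ Set.Icc (0:ℝ) t := ⟨hs.1.le, hs.2.le⟩
      have hEnn : (0:ℝ) ≤ ∑' k : ℕ, (b * (t - s) ^ α) ^ k / Real.Gamma ((k : ℝ) * α + α) :=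
        tsum_nonneg fun k => div_nonneg (by positivity) (hΓpos k).le
      have hreal : ‖T (t - s) (f s)‖ ≤ ∑' k, g k s := by
        have hsummand : Summable (fun k : ℕ =>
            (b * (t - s) ^ α) ^ k / Real.Gamma ((k : ℝ) * α + α)) :=
          summable_ml _ hα1.le hα0 (by positivity)
        have htsumg : ∑' k, g k s =
            (M * N * Real.exp (ω * t) * (t - s) ^ (α - 1)) *
              ∑' k : ℕ, (b * (t - s) ^ α) ^ k / Real.Gamma ((k : ℝ) * α + α) := by
          rw [hgdef]; exact tsum_mul_left
        rw [htsumg]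
        have hb1 := hTbd (t - s) hu
        have hfs := hfN s hsmem
        have hexp : Real.exp (ω * (t - s)) ≤ Real.exp (ω * t) :=
          Real.exp_le_exp.2 (by nlinarith [hs.1])
        have hrp : (0:ℝ) ≤ (t - s) ^ (α - 1) := Real.rpow_nonneg hu0 _
        calc ‖T (t - s) (f s)‖ ≤ ‖T (t - s)‖ * ‖f s‖ := (T (t - s)).le_opNorm (f s)
          _ ≤ (M * Real.exp (ω * (t - s)) * (t - s) ^ (α - 1) *
              ∑' k : ℕ, (b * (t - s) ^ α) ^ k / Real.Gamma ((k : ℝ) * α + α)) * N := by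
            apply mul_le_mul hb1 hfs (norm_nonneg _)
            have := (T (t - s)).opNorm_nonneg
            linarith [hb1, (T (t - s)).opNorm_nonneg]
          _ ≤ (M * N * Real.exp (ω * t) * (t - s) ^ (α - 1)) *
              ∑' k : ℕ, (b * (t - s) ^ α) ^ k / Real.Gamma ((k : ℝ) * α + α) := by
            have h1 : M * Real.exp (ω * (t - s)) * (t - s) ^ (α - 1) *
                (∑' k : ℕ, (b * (t - s) ^ α) ^ k / Real.Gamma ((k : ℝ) * α + α)) * N ≤
                M * Real.exp (ω * t) * (t - s) ^ (α - 1) *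
                (∑' k : ℕ, (b * (t - s) ^ α) ^ k / Real.Gamma ((k : ℝ) * α + α)) * N := by
              gcongr
            linarith [h1, le_of_eq (show
              M * Real.exp (ω * t) * (t - s) ^ (α - 1) *
                (∑' k : ℕ, (b * (t - s) ^ α) ^ k / Real.Gamma ((k : ℝ) * α + α)) * N =
              (M * N * Real.exp (ω * t) * (t - s) ^ (α - 1)) *
                ∑' k : ℕ, (b * (t - s) ^ α) ^ k / Real.Gamma ((k : ℝ) * α + α) by ring)]
      calc ENNReal.ofReal ‖T (t - s) (f s)‖ ≤ ENNReal.ofReal (∑' k, g k s) :=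
            ENNReal.ofReal_le_ofReal hreal
        _ = ∑' k, ENNReal.ofReal (g k s) := by
            refine ENNReal.ofReal_tsum_of_nonneg (fun k => hgnn k s hs) ?_
            have hsummand : Summable (fun k : ℕ =>
                (b * (t - s) ^ α) ^ k / Real.Gamma ((k : ℝ) * α + α)) :=
              summable_ml _ hα1.le hα0 (by positivity)
            exact hsummand.mul_left _
    refine le_trans hstep1 ?_
    rw [lintegral_tsum fun k => ((hgInt k).aestronglyMeasurable.aemeasurable).ennreal_ofReal]
    have hperk : ∀ k : ℕ, ∫⁻ s in Set.Ioo (0:ℝ) t, ENNReal.ofReal (g k s) =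
        ENNReal.ofReal (c k) := by
      intro k
      rw [← MeasureTheory.ofReal_integral_eq_lintegral_ofReal (hgInt k)
        (ae_restrict_of_forall_mem measurableSet_Ioo (hgnn k))]
      rw [hgintval k]
    rw [tsum_congr hperk, ← ENNReal.ofReal_tsum_of_nonneg hck_nonneg hcsum]
  refine le_trans hmain (le_of_eq ?_)
  rw [hcdef]
  rw [tsum_mul_left]
end

section
/- Let X be a real Banach space and A, B ∈ L(X). Define Q : ℕ × ℕ → L(X) by Q(k,0) = A^k for all k ∈ ℕ, and Q(k,m) = Σ_{l=0}^{k} A^(k−l) B Q(l, m−1) for k ∈ ℕ and m ≥ 1 (so in particular Q(0,m) = B^m). If A and B commute, i.e. AB = BA, then Q(k,m) = C(k+m, m) · A^k · B^m for all k, m ∈ ℕ, where C(k+m, m) is the binomial coefficient. -/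
/-- In the permutable case `AB = BA`, the recursively defined operators
`Q(k,0) = A^k`, `Q(k,m) = Σ_{l=0}^{k} A^{k−l} B Q(l,m−1)` are given by
`Q(k,m) = C(k+m,m) A^k B^m`. -/
theorem Q_permutable_case {X : Type*} [NormedAddCommGroup X]
    [NormedSpace ℝ X] [CompleteSpace X]
    (A B : X →L[ℝ] X) (hAB : A * B = B * A)
    (Q : ℕ × ℕ → X →L[ℝ] X)
    (hQ0 : ∀ k : ℕ, Q (k, 0) = A ^ k)
    (hQrec : ∀ (k m : ℕ),
      Q (k, m + 1) = ∑ l ∈ Finset.range (k + 1), A ^ (k - l) * B * Q (l, m)) :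
    ∀ k m : ℕ, Q (k, m) = ((k + m).choose m : ℝ) • (A ^ k * B ^ m) := by
  have hC : Commute A B := hAB
  intro k m
  induction m generalizing k with
  | zero => simp [hQ0]
  | succ m ih =>
    rw [hQrec]
    have hsum : ∑ l ∈ Finset.range (k + 1), (l + m).choose m
        = (k + (m + 1)).choose (m + 1) := by
      induction k with
      | zero => simp
      | succ k ihk =>
        rw [Finset.sum_range_succ, ihk,
          show (k + 1) + (m + 1) = (k + (m + 1)) + 1 from by omega,
          Nat.choose_succ_succ, show k + 1 + m = k + (m + 1) from by omega,
          Nat.add_comm]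
    have step : ∀ l ∈ Finset.range (k + 1),
        A ^ (k - l) * B * Q (l, m)
          = ((l + m).choose m : ℝ) • (A ^ k * B ^ (m + 1)) := by
      intro l hl
      rw [ih l, mul_smul_comm]
      congr 1
      have hcomm : B * A ^ l = A ^ l * B := (hC.symm.pow_right l).eq
      have hle : l ≤ k := Nat.lt_succ_iff.mp (Finset.mem_range.mp hl)
      rw [mul_assoc (A ^ (k - l)) B, ← mul_assoc B, hcomm, mul_assoc (A ^ l),
        ← mul_assoc, ← pow_add, Nat.sub_add_cancel hle, ← pow_succ']
    rw [Finset.sum_congr rfl step, ← Finset.sum_smul]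
    congr 1
    push_cast [← hsum]
    rfl
end
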